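/- Let Q be a PMQ with a norm N : Q → ℕ, i.e. N(1) = 0, N(a) ≥ 1 for a ≠ 1, N(a^b) = N(a) for all a,b, and N(ab) = N(a) + N(b) whenever ab is defined. Then the norm extends to a monoid homomorphism N̂ : Q̂ → (ℕ,+) on the completion Q̂, determined by N̂(â) = N(a). -/

import Mathlib

/-- A partially multiplicative quandle (PMQ): a set with a unit, a (total) conjugation
operation `conj a b = a^b`, and a partially defined multiplication (`pmul a b = some c`
meaning that `ab` is defined and equal to `c`), satisfying the PMQ axioms. -/
structure PMQ (Q : Type*) where
  one : Q
  conj : Q → Q → Q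
  pmul : Q → Q → Option Q
  conj_one : ∀ a, conj a one = a
  one_conj : ∀ a, conj one a = one
  conj_self : ∀ a, conj a a = a
  conj_bijective : ∀ b, Function.Bijective fun a => conj a b
  conj_conj : ∀ a b c, conj (conj a b) c = conj (conj a c) (conj b c)
  one_pmul : ∀ a, pmul one a = some a
  pmul_one : ∀ a, pmul a one = some a
  pmul_assoc : ∀ a b c ab bc, pmul a b = some ab → pmul b c = some bc →
    pmul ab c = pmul a bc
  pmul_conj : ∀ a b c ab, pmul a b = some ab →
    pmul (conj a c) (conj b c) = some (conj ab c)
  conj_pmul : ∀ a b c bc, pmul b c = some bc → conj a bc = conj (conj a b) c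


/-- The defining relations of the completion `Q̂`, as a relation on the free semigroup
on the symbols `â`, `a ∈ Q`. -/
def pmqRel {Q : Type*} (P : PMQ Q) : FreeSemigroup Q → FreeSemigroup Q → Prop := fun x y =>
  (∃ a b : Q, x = FreeSemigroup.of a * FreeSemigroup.of b ∧
      y = FreeSemigroup.of b * FreeSemigroup.of (P.conj a b)) ∨
  (∃ a b c : Q, P.pmul a b = some c ∧
      x = FreeSemigroup.of a * FreeSemigroup.of b ∧ y = FreeSemigroup.of c)

/-- The completion `Q̂` of a PMQ `Q`: the free (non-unital) monoid on symbols `â`, `a ∈ Q`,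
modulo the relations `â·b̂ = b̂·(a▷b)^` and `â·b̂ = (ab)^` whenever `ab` is defined. -/
abbrev PMQCompletion {Q : Type*} (P : PMQ Q) := (conGen (pmqRel P)).Quotient

/-- The generator `â ∈ Q̂` corresponding to `a ∈ Q`. -/
def PMQCompletion.hat {Q : Type*} (P : PMQ Q) (a : Q) : PMQCompletion P :=
  ((FreeSemigroup.of a : FreeSemigroup Q) : (conGen (pmqRel P)).Quotient)

/-- a norm `N : Q → ℕ` on a PMQ extends to a (unique) additive
homomorphism `N̂ : Q̂ → (ℕ,+)` on the completion, determined by `N̂(â) = N(a)`. -/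
theorem norm_extends_to_completion {Q : Type*} (P : PMQ Q) (N : Q → ℕ)
    (hN_one : N P.one = 0)
    (hN_pos : ∀ a : Q, a ≠ P.one → 1 ≤ N a)
    (hN_conj : ∀ a b : Q, N (P.conj a b) = N a)
    (hN_mul : ∀ a b c : Q, P.pmul a b = some c → N c = N a + N b) :
    ∃! Nhat : PMQCompletion P → ℕ,
      (∀ x y : PMQCompletion P, Nhat (x * y) = Nhat x + Nhat y) ∧
      (∀ a : Q, Nhat (PMQCompletion.hat P a) = N a) := by

  classical
  -- Lift N to the free semigroup (multiplicatively)
  let F : FreeSemigroup Q →ₙ* Multiplicative ℕ :=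
    FreeSemigroup.lift (fun a => Multiplicative.ofAdd (N a))
  have hF : ∀ x y : FreeSemigroup Q, conGen (pmqRel P) x y → F x = F y := by
    intro x y h
    induction h with
    | of x y h =>
      rcases h with ⟨a, b, hx, hy⟩ | ⟨a, b, c, hc, hx, hy⟩
      · subst hx; subst hy
        simp only [F, map_mul, FreeSemigroup.lift_of]
        rw [hN_conj a b]
        exact mul_comm _ _
      · subst hx; subst hy
        simp only [F, map_mul, FreeSemigroup.lift_of]
        rw [hN_mul a b c hc]
        rfl
    | refl => rfl
    | symm _ ih => exact ih.symm
    | trans _ _ ih1 ih2 => exact ih1.trans ih2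
    | mul _ _ ih1 ih2 => simp only [map_mul, ih1, ih2]
  let Nhat : PMQCompletion P → ℕ :=
    Quotient.lift (fun x => Multiplicative.toAdd (F x)) (fun x y h => by show Multiplicative.toAdd (F x) = Multiplicative.toAdd (F y); rw [hF x y h])
  have hmul : ∀ x y : PMQCompletion P, Nhat (x * y) = Nhat x + Nhat y := by
    rintro ⟨x⟩ ⟨y⟩
    show Multiplicative.toAdd (F (x * y)) = _
    simp only [map_mul, toAdd_mul]
    rfl
  have hhat : ∀ a : Q, Nhat (PMQCompletion.hat P a) = N a := by
    intro a
    show Multiplicative.toAdd (F (FreeSemigroup.of a)) = N a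
    simp [F]
  refine ⟨Nhat, ⟨hmul, hhat⟩, ?_⟩
  rintro g ⟨gmul, ghat⟩
  funext q
  induction q using Quotient.inductionOn with
  | h x =>
    induction x using FreeSemigroup.recOnMul with
    | ih1 a => exact (ghat a).trans (hhat a).symm
    | ih2 x y ihx ihy =>
      show g ((↑(FreeSemigroup.of x) : PMQCompletion P) * ↑y) =
          Nhat ((↑(FreeSemigroup.of x) : PMQCompletion P) * ↑y)
      rw [gmul, hmul]
      exact congrArg₂ (· + ·) ihx ihy
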